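/- Let a, b, c, d, e, f, g, h ∈ D_n satisfy: h ≥ a|b|c|a*|b*|c*; a|b|c ≤ d ≤ h; a|b*|c* ≤ e ≤ h; b|a*|c* ≤ f ≤ h; c|a*|b* ≤ g ≤ h. Then the function H : Bool^4 → D_n with values (listing H(0000),...,H(1111) in the binary order 0000,0001,0010,0011,0100,0101,0110,0111,1000,1001,1010,1011,1100,1101,1110,1111): h*, g*, f*, a, e*, b, c, d, d*, c*, b*, e, a*, f, g, h, is monotone and corresponds to a self-dual element of D_{n+4}. -/
import Mathlib


abbrev BF (n : ℕ) := (Fin n → Bool) → Bool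

def dual {n : ℕ} (f : BF n) : BF n := fun v => ! f (fun i => ! v i)

/-- The function `H : Bool⁴ → (Boolean functions)` with values
`h*, g*, f*, a, e*, b, c, d, d*, c*, b*, e, a*, f, g, h`
on `0000, 0001, ..., 1111` in binary order. -/
def H4 {n : ℕ} (a b c d e f g h : BF n) : (Fin 4 → Bool) → BF n := fun u =>
  match u 0, u 1, u 2, u 3 with
  | false, false, false, false => dual h
  | false, false, false, true  => dual g
  | false, false, true,  false => dual f
  | false, false, true,  true  => a
  | false, true,  false, false => dual e
  | false, true,  false, true  => b
  | false, true,  true,  false => c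
  | false, true,  true,  true  => d
  | true,  false, false, false => dual d
  | true,  false, false, true  => dual c
  | true,  false, true,  false => dual b
  | true,  false, true,  true  => e
  | true,  true,  false, false => dual a
  | true,  true,  false, true  => f
  | true,  true,  true,  false => g
  | true,  true,  true,  true  => h


lemma dual_dual {n : ℕ} (x : BF n) : dual (dual x) = x := by
  funext v; simp [dual]

lemma dual_le_dual {n : ℕ} {x y : BF n} (hxy : x ≤ y) : dual y ≤ dual x := by
  intro v
  have h := hxy (fun i => ! v i)
  simp only [dual]
  cases hx : x (fun i => ! v i) <;> cases hy : y (fun i => ! v i) <;> simp_all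

lemma dual_le_of_dual_le {n : ℕ} {x y : BF n} (hx : dual x ≤ y) : dual y ≤ x := by
  have h := dual_le_dual hx; rwa [dual_dual] at h

lemma mono_dual {n : ℕ} {x : BF n} (hx : Monotone x) : Monotone (dual x) := by
  intro v w hvw
  simp only [dual]
  have h : x (fun i => ! w i) ≤ x (fun i => ! v i) := by
    apply hx
    intro i
    have := hvw i
    cases hv : v i <;> cases hw : w i <;> simp_all
  cases hxw : x (fun i => ! w i) <;> cases hxv : x (fun i => ! v i) <;> simp_all

theorem stmt_15 {n : ℕ} (a b c d e f g h : BF n)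
    (ha : Monotone a) (hb : Monotone b) (hc : Monotone c) (hd : Monotone d)
    (he : Monotone e) (hf : Monotone f) (hg : Monotone g) (hh : Monotone h)
    (hbig : a ⊔ b ⊔ c ⊔ dual a ⊔ dual b ⊔ dual c ≤ h)
    (hd1 : a ⊔ b ⊔ c ≤ d) (hd2 : d ≤ h)
    (he1 : a ⊔ dual b ⊔ dual c ≤ e) (he2 : e ≤ h)
    (hf1 : b ⊔ dual a ⊔ dual c ≤ f) (hf2 : f ≤ h)
    (hg1 : c ⊔ dual a ⊔ dual b ≤ g) (hg2 : g ≤ h) :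
    (∀ u, Monotone (H4 a b c d e f g h u)) ∧ Monotone (H4 a b c d e f g h) ∧
      (∀ u : Fin 4 → Bool,
        H4 a b c d e f g h u = dual (H4 a b c d e f g h (fun i => ! u i))) := by
  refine ⟨?_, ?_, ?_⟩
  · intro u
    cases hu0 : u 0 <;> cases hu1 : u 1 <;> cases hu2 : u 2 <;> cases hu3 : u 3 <;>
      simp only [H4, hu0, hu1, hu2, hu3] <;>
      first
        | exact ha | exact hb | exact hc | exact hd
        | exact he | exact hf | exact hg | exact hh
        | exact mono_dual ha | exact mono_dual hb | exact mono_dual hc | exact mono_dual hd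
        | exact mono_dual he | exact mono_dual hf | exact mono_dual hg | exact mono_dual hh
  · intro u v huv

    have had : a ≤ d := le_trans (le_trans le_sup_left le_sup_left) hd1
    have hbd : b ≤ d := le_trans (le_trans le_sup_right le_sup_left) hd1
    have hcd : c ≤ d := le_trans le_sup_right hd1
    have hae : a ≤ e := le_trans (le_trans le_sup_left le_sup_left) he1
    have hbe : dual b ≤ e := le_trans (le_trans le_sup_right le_sup_left) he1
    have hce : dual c ≤ e := le_trans le_sup_right he1
    have hbf : b ≤ f := le_trans (le_trans le_sup_left le_sup_left) hf1
    have haf : dual a ≤ f := le_trans (le_trans le_sup_right le_sup_left) hf1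
    have hcf : dual c ≤ f := le_trans le_sup_right hf1
    have hcg : c ≤ g := le_trans (le_trans le_sup_left le_sup_left) hg1
    have hag : dual a ≤ g := le_trans (le_trans le_sup_right le_sup_left) hg1
    have hbg : dual b ≤ g := le_trans le_sup_right hg1

    have p0_1 : (dual h : BF n) ≤ dual g := dual_le_dual hg2
    have p0_2 : (dual h : BF n) ≤ dual f := dual_le_dual hf2
    have p0_4 : (dual h : BF n) ≤ dual e := dual_le_dual he2
    have p0_8 : (dual h : BF n) ≤ dual d := dual_le_dual hd2
    have p1_3 : (dual g : BF n) ≤ a := dual_le_of_dual_le hag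
    have p1_5 : (dual g : BF n) ≤ b := dual_le_of_dual_le hbg
    have p1_9 : (dual g : BF n) ≤ dual c := dual_le_dual hcg
    have p2_3 : (dual f : BF n) ≤ a := dual_le_of_dual_le haf
    have p2_6 : (dual f : BF n) ≤ c := dual_le_of_dual_le hcf
    have p2_10 : (dual f : BF n) ≤ dual b := dual_le_dual hbf
    have p4_5 : (dual e : BF n) ≤ b := dual_le_of_dual_le hbe
    have p4_6 : (dual e : BF n) ≤ c := dual_le_of_dual_le hce
    have p4_12 : (dual e : BF n) ≤ dual a := dual_le_dual hae
    have p8_9 : (dual d : BF n) ≤ dual c := dual_le_dual hcd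
    have p8_10 : (dual d : BF n) ≤ dual b := dual_le_dual hbd
    have p8_12 : (dual d : BF n) ≤ dual a := dual_le_dual had
    have p3_7 : (a : BF n) ≤ d := had
    have p3_11 : (a : BF n) ≤ e := hae
    have p5_7 : (b : BF n) ≤ d := hbd
    have p5_13 : (b : BF n) ≤ f := hbf
    have p6_7 : (c : BF n) ≤ d := hcd
    have p6_14 : (c : BF n) ≤ g := hcg
    have p9_11 : (dual c : BF n) ≤ e := hce
    have p9_13 : (dual c : BF n) ≤ f := hcf
    have p10_11 : (dual b : BF n) ≤ e := hbe
    have p10_14 : (dual b : BF n) ≤ g := hbg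
    have p12_13 : (dual a : BF n) ≤ f := haf
    have p12_14 : (dual a : BF n) ≤ g := hag
    have p7_15 : (d : BF n) ≤ h := hd2
    have p11_15 : (e : BF n) ≤ h := he2
    have p13_15 : (f : BF n) ≤ h := hf2
    have p14_15 : (g : BF n) ≤ h := hg2
    have p0_3 : (dual h : BF n) ≤ a := le_trans p0_1 p1_3
    have p0_5 : (dual h : BF n) ≤ b := le_trans p0_1 p1_5
    have p0_6 : (dual h : BF n) ≤ c := le_trans p0_2 p2_6
    have p0_7 : (dual h : BF n) ≤ d := le_trans p0_3 p3_7
    have p0_9 : (dual h : BF n) ≤ dual c := le_trans p0_1 p1_9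
    have p0_10 : (dual h : BF n) ≤ dual b := le_trans p0_2 p2_10
    have p0_11 : (dual h : BF n) ≤ e := le_trans p0_3 p3_11
    have p0_12 : (dual h : BF n) ≤ dual a := le_trans p0_4 p4_12
    have p0_13 : (dual h : BF n) ≤ f := le_trans p0_5 p5_13
    have p0_14 : (dual h : BF n) ≤ g := le_trans p0_6 p6_14
    have p0_15 : (dual h : BF n) ≤ h := le_trans p0_7 p7_15
    have p1_7 : (dual g : BF n) ≤ d := le_trans p1_3 p3_7
    have p1_11 : (dual g : BF n) ≤ e := le_trans p1_3 p3_11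
    have p1_13 : (dual g : BF n) ≤ f := le_trans p1_5 p5_13
    have p1_15 : (dual g : BF n) ≤ h := le_trans p1_7 p7_15
    have p2_7 : (dual f : BF n) ≤ d := le_trans p2_3 p3_7
    have p2_11 : (dual f : BF n) ≤ e := le_trans p2_3 p3_11
    have p2_14 : (dual f : BF n) ≤ g := le_trans p2_6 p6_14
    have p2_15 : (dual f : BF n) ≤ h := le_trans p2_7 p7_15
    have p3_15 : (a : BF n) ≤ h := le_trans p3_7 p7_15
    have p4_7 : (dual e : BF n) ≤ d := le_trans p4_5 p5_7
    have p4_13 : (dual e : BF n) ≤ f := le_trans p4_5 p5_13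
    have p4_14 : (dual e : BF n) ≤ g := le_trans p4_6 p6_14
    have p4_15 : (dual e : BF n) ≤ h := le_trans p4_7 p7_15
    have p5_15 : (b : BF n) ≤ h := le_trans p5_7 p7_15
    have p6_15 : (c : BF n) ≤ h := le_trans p6_7 p7_15
    have p8_11 : (dual d : BF n) ≤ e := le_trans p8_9 p9_11
    have p8_13 : (dual d : BF n) ≤ f := le_trans p8_9 p9_13
    have p8_14 : (dual d : BF n) ≤ g := le_trans p8_10 p10_14
    have p8_15 : (dual d : BF n) ≤ h := le_trans p8_11 p11_15
    have p9_15 : (dual c : BF n) ≤ h := le_trans p9_11 p11_15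
    have p10_15 : (dual b : BF n) ≤ h := le_trans p10_11 p11_15
    have p12_15 : (dual a : BF n) ≤ h := le_trans p12_13 p13_15

    cases hu0 : u 0 <;> cases hv0 : v 0 <;> cases hu1 : u 1 <;> cases hv1 : v 1 <;>
      cases hu2 : u 2 <;> cases hv2 : v 2 <;> cases hu3 : u 3 <;> cases hv3 : v 3 <;>
      first
        | exact absurd (huv 0) (by rw [hu0, hv0]; decide)
        | exact absurd (huv 1) (by rw [hu1, hv1]; decide)
        | exact absurd (huv 2) (by rw [hu2, hv2]; decide)
        | exact absurd (huv 3) (by rw [hu3, hv3]; decide)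
        | (simp only [H4, hu0, hu1, hu2, hu3, hv0, hv1, hv2, hv3]; first | exact le_refl _ | assumption)
  · intro u
    cases hu0 : u 0 <;> cases hu1 : u 1 <;> cases hu2 : u 2 <;> cases hu3 : u 3 <;>
      simp [H4, hu0, hu1, hu2, hu3, dual_dual]
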